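/- arXiv:2010.05053 — 4 statements merged into one kernel-verified Lean document; each statement's English description precedes it below -/
import Mathlib

section
/- Let F, G, R be three pairwise distinct k-faces of a d-polytope Q with 1 ≤ k ≤ d−1. Then there exists an affine hyperplane H that intersects both F and G, is disjoint from R, and contains no vertex of Q. -/
open Set Classical

/-- Points of `ℝ^N`. -/
abbrev Pt (N : ℕ) := EuclideanSpace ℝ (Fin N)

/-- A polytope: the convex hull of a finite set of points. -/
def IsPolytope {N : ℕ} (Q : Set (Pt N)) : Prop :=
  ∃ S : Set (Pt N), S.Finite ∧ Q = convexHull ℝ S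

/-- Dimension of a subset of `ℝ^N`: the dimension of its affine span,
with the empty set having dimension `-1`. -/
noncomputable def faceDim {N : ℕ} (s : Set (Pt N)) : ℤ :=
  if s = ∅ then -1 else (Module.finrank ℝ (affineSpan ℝ s).direction : ℤ)

/-- A face of a polytope: an exposed subset (this includes `∅` and the polytope itself). -/
def IsFaceOf {N : ℕ} (Q F : Set (Pt N)) : Prop :=
  IsExposed ℝ Q F

/-- A `k`-face: a face of dimension `k`. -/
def IsKFaceOf {N : ℕ} (k : ℕ) (Q F : Set (Pt N)) : Prop :=
  IsFaceOf Q F ∧ faceDim F = k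

/-- A vertex: a point spanning a `0`-dimensional face. -/
def IsVertexOf {N : ℕ} (Q : Set (Pt N)) (v : Pt N) : Prop :=
  IsKFaceOf 0 Q {v}

/-- An affine hyperplane: the zero set of a nonconstant affine functional. -/
def IsHyperplane {N : ℕ} (H : Set (Pt N)) : Prop :=
  ∃ f : Pt N →ᵃ[ℝ] ℝ, f.linear ≠ 0 ∧ H = {x | f x = 0}

/-!
Pick `p` in the relative interior of `F` and `q` in that of `G`. A relative interior point of a
`k`-face lies in no other `k`-face, so by extremality the line `pq` misses `R`, and strictly
separating the compact set `R` from this line gives an affine function vanishing at `p` and `q` and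
negative on `R`. As `k ≥ 1`, neither `F` nor `G` lies in the line; a small perturbation makes the
function nonzero at points of `F` and `G` off the line, and since `p` and `q` are relative interior
points it then takes both signs on `F` and on `G`. The zero set of the function plus a small constant,
chosen to avoid its finitely many values at the vertices, is the required hyperplane.
-/

open Filter Topology AffineMap

lemma AffineSubspace.eq_of_le_of_finrank_direction_le {V P : Type*} [AddCommGroup V]
    [Module ℝ V] [AddTorsor V P] {s t : AffineSubspace ℝ P} [FiniteDimensional ℝ t.direction]
    (hst : s ≤ t) (hs : (s : Set P).Nonempty)
    (hrank : Module.finrank ℝ t.direction ≤ Module.finrank ℝ s.direction) : s = t :=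
  eq_of_direction_eq_of_nonempty_of_le
    (Submodule.eq_of_le_of_finrank_le (AffineSubspace.direction_le hst) hrank) hs hst

section Convexity

variable {E : Type*} [NormedAddCommGroup E] [NormedSpace ℝ E]

lemma mem_openSegment_lineMap_of_one_lt (x y : E) {t : ℝ} (ht : 1 < t) :
    y ∈ openSegment ℝ x (lineMap x y t) := by
  rw [openSegment_eq_image_lineMap]
  refine ⟨t⁻¹, ⟨by positivity, inv_lt_one_of_one_lt₀ ht⟩, ?_⟩
  rw [lineMap_lineMap_right, inv_mul_cancel₀ (by positivity), lineMap_apply_one]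

lemma IsExtreme.mem_of_sbtw {Q F : Set E} {x y z : E} (hF : IsExtreme ℝ Q F) (hx : x ∈ Q)
    (hz : z ∈ Q) (hy : y ∈ F) (hxyz : Sbtw ℝ x y z) : x ∈ F ∧ z ∈ F := by
  have hseg : y ∈ openSegment ℝ x z := openSegment_eq_image_lineMap ℝ x z ▸ hxyz.mem_image_Ioo
  exact ⟨hF.left_mem_of_mem_openSegment hx hz hy hseg,
    hF.right_mem_of_mem_openSegment hx hz hy hseg⟩

lemma eventually_lineMap_mem_of_mem_intrinsicInterior {F : Set E} {p x : E}
    (hp : p ∈ intrinsicInterior ℝ F) (hx : x ∈ affineSpan ℝ F) :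
    ∀ᶠ t in 𝓝 (1 : ℝ), lineMap x p t ∈ F := by
  obtain ⟨y, hy, rfl⟩ := mem_intrinsicInterior.mp hp
  let path : ℝ → affineSpan ℝ F := fun t => ⟨lineMap x (y : E) t, lineMap_mem t hx y.2⟩
  have hpath : Continuous path := lineMap_continuous.subtype_mk _
  have h1 : path 1 = y := Subtype.ext (lineMap_apply_one x (y : E))
  exact (hpath.tendsto 1).eventually (mem_interior_iff_mem_nhds.mp (h1 ▸ hy))

lemma exists_one_lt_lineMap_mem_of_mem_intrinsicInterior {F : Set E} {p x : E}
    (hp : p ∈ intrinsicInterior ℝ F) (hx : x ∈ affineSpan ℝ F) :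
    ∃ t : ℝ, 1 < t ∧ lineMap x p t ∈ F :=
  (eventually_mem_nhdsWithin.and (eventually_nhdsWithin_of_eventually_nhds (a := (1 : ℝ))
    (s := Ioi 1) (eventually_lineMap_mem_of_mem_intrinsicInterior hp hx))).exists

lemma IsExtreme.mem_of_mem_affineSpan {Q F G : Set E} {p x : E} (hG : IsExtreme ℝ Q G)
    (hFQ : F ⊆ Q) (hp : p ∈ intrinsicInterior ℝ F) (hpG : p ∈ G) (hxQ : x ∈ Q)
    (hx : x ∈ affineSpan ℝ F) : x ∈ G := by
  obtain ⟨t, ht, htF⟩ := exists_one_lt_lineMap_mem_of_mem_intrinsicInterior hp hx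
  exact hG.left_mem_of_mem_openSegment hxQ (hFQ htF) hpG
    (mem_openSegment_lineMap_of_one_lt x p ht)

lemma disjoint_line_of_isExtreme {Q F G R : Set E} (hF : IsExtreme ℝ Q F)
    (hG : IsExtreme ℝ Q G) (hR : IsExtreme ℝ Q R) {p q : E} (hpF : p ∈ F) (hpG : p ∉ G) (hpR : p ∉ R) (hqG : q ∈ G) (hqF : q ∉ F)
    (hqR : q ∉ R) : Disjoint R line[ℝ, p, q] := by
  have hpQ := hF.subset hpF
  have hqQ := hG.subset hqG
  refine disjoint_left.2 fun r hrR hrL => ?_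
  have hrQ := hR.subset hrR
  have hne : ∀ {a b : E}, a ∈ R → b ∉ R → b ≠ a := fun ha hb hba => hb (hba ▸ ha)
  rcases (collinear_insert_of_mem_affineSpan_pair hrL).wbtw_or_wbtw_or_wbtw with h | h | h
  · exact hqF (hF.mem_of_sbtw hrQ hqQ hpF ⟨h, hne hrR hpR, fun hpq => hqF (hpq ▸ hpF)⟩).2
  · exact hpG (hG.mem_of_sbtw hpQ hrQ hqG ⟨h, fun hqp => hqF (hqp ▸ hpF), hne hrR hqR⟩).1
  · exact hqR (hR.mem_of_sbtw hqQ hpQ hrR ⟨h, (hne hrR hqR).symm, (hne hrR hpR).symm⟩).1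

end Convexity

section Faces

variable {N k : ℕ} {Q F G : Set (Pt N)}

lemma IsKFaceOf.nonempty (hF : IsKFaceOf k Q F) : F.Nonempty := by
  rw [nonempty_iff_ne_empty]
  intro hempty
  have := hF.2
  rw [faceDim, if_pos hempty] at this
  omega

lemma IsKFaceOf.finrank_direction (hF : IsKFaceOf k Q F) :
    Module.finrank ℝ (affineSpan ℝ F).direction = k := by
  have := hF.2
  rw [faceDim, if_neg hF.nonempty.ne_empty] at this
  exact_mod_cast this

lemma IsKFaceOf.isExtreme (hF : IsKFaceOf k Q F) : IsExtreme ℝ Q F :=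
  IsExposed.isExtreme hF.1

lemma IsKFaceOf.subset (hF : IsKFaceOf k Q F) : F ⊆ Q :=
  IsExposed.subset hF.1

lemma IsKFaceOf.notMem_of_mem_intrinsicInterior (hF : IsKFaceOf k Q F)
    (hG : IsKFaceOf k Q G) (hFG : F ≠ G) {p : Pt N} (hp : p ∈ intrinsicInterior ℝ F) :
    p ∉ G := by
  intro hpG
  have hFG' : F ⊆ G := fun x hx =>
    hG.isExtreme.mem_of_mem_affineSpan hF.subset hp hpG (hF.subset hx) (mem_affineSpan ℝ hx)
  have hspan : affineSpan ℝ F = affineSpan ℝ G :=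
    AffineSubspace.eq_of_le_of_finrank_direction_le (affineSpan_mono ℝ hFG')
      ((affineSpan_nonempty ℝ).2 hF.nonempty)
      (by rw [hF.finrank_direction, hG.finrank_direction])
  refine hFG (hFG'.antisymm fun y hy => ?_)
  exact hF.isExtreme.mem_of_mem_affineSpan hF.subset hp (intrinsicInterior_subset hp)
    (hG.subset hy) (hspan ▸ mem_affineSpan ℝ hy)

lemma IsKFaceOf.not_subset_line (hF : IsKFaceOf k Q F) (hk : 1 ≤ k) {p q : Pt N}
    (hp : p ∈ intrinsicInterior ℝ F) (hqQ : q ∈ Q) (hqF : q ∉ F) :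
    ¬ F ⊆ line[ℝ, p, q] := by
  intro hFL
  have hline : Module.finrank ℝ (line[ℝ, p, q]).direction ≤ 1 := by
    rw [direction_affineSpan]
    exact (collinear_iff_finrank_le_one).1 (collinear_pair ℝ p q)
  have hspan : affineSpan ℝ F = line[ℝ, p, q] :=
    AffineSubspace.eq_of_le_of_finrank_direction_le (affineSpan_le.2 hFL)
      ((affineSpan_nonempty ℝ).2 hF.nonempty) (by rw [hF.finrank_direction]; omega)
  exact hqF (hF.isExtreme.mem_of_mem_affineSpan hF.subset hp (intrinsicInterior_subset hp) hqQ
    (hspan ▸ right_mem_affineSpan_pair ℝ p q))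

end Faces

lemma eq_of_forall_lt_lineMap {a b v : ℝ} (h : ∀ t : ℝ, v < lineMap a b t) : a = b := by
  by_contra hab
  have := h ((v - a) / (b - a))
  rw [lineMap_apply_ring', div_mul_cancel₀ _ (sub_ne_zero.2 (Ne.symm hab))] at this
  linarith

lemma eventually_add_mul_ne_zero {a b : ℝ} (hb : b ≠ 0) : ∀ᶠ ε in 𝓝[≠] 0, a + ε * b ≠ 0 := by
  filter_upwards [nhdsNE_le_cofinite (0 : ℝ) (eventually_cofinite_ne (-a / b))] with ε hε
  contrapose! hε
  field_simp
  linarith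

lemma IsCompact.eventually_forall_add_mul_lt_zero {X : Type*} [TopologicalSpace X] {K : Set X}
    (hK : IsCompact K) {f g : X → ℝ} (hf : Continuous f) (hg : Continuous g)
    (hfK : ∀ z ∈ K, f z < 0) : ∀ᶠ ε in 𝓝 (0 : ℝ), ∀ z ∈ K, f z + ε * g z < 0 := by
  refine hK.eventually_forall_of_forall_eventually fun z hz => ?_
  have hcont : Continuous fun w : ℝ × X => f w.2 + w.1 * g w.2 := by fun_prop
  exact (hcont.tendsto (0, z)).eventually_lt_const (by simpa using hfK z hz)

lemma IsPreconnected.eventually_exists_add_eq_zero {X : Type*} [TopologicalSpace X] {F : Set X}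
    (hF : IsPreconnected F) {f : X → ℝ} (hf : Continuous f) {a b : X} (ha : a ∈ F) (hb : b ∈ F)
    (hfa : f a < 0) (hfb : 0 < f b) : ∀ᶠ t in 𝓝 (0 : ℝ), ∃ z ∈ F, f z + t = 0 := by
  filter_upwards [eventually_lt_nhds (neg_pos.2 hfa), eventually_gt_nhds (neg_neg_of_pos hfb)]
    with t hta htb
  exact hF.intermediate_value ha hb (f := fun z => f z + t) (by fun_prop)
    ⟨by linarith, by linarith⟩

section VanishingAffineMaps

variable {K V : Type*} [Field K] [AddCommGroup V] [Module K V]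

lemma exists_affineMap_eq_zero_of_notMem (s : AffineSubspace K V) {p x : V} (hp : p ∈ s)
    (hx : x ∉ s) : ∃ g : V →ᵃ[K] K, (∀ z ∈ s, g z = 0) ∧ g x ≠ 0 := by
  have hxp : x - p ∉ s.direction := fun h => hx (by simpa using s.vadd_mem_of_mem_direction h hp)
  obtain ⟨f, hfx, hf⟩ := Submodule.exists_dual_map_eq_bot_of_notMem hxp inferInstance
  refine ⟨f.toAffineMap - AffineMap.const K V (f p), fun z hz => ?_, ?_⟩
  · have : f (z - p) = 0 := by
      rw [← Submodule.mem_bot K, ← hf]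
      exact Submodule.mem_map_of_mem (s.vsub_mem_direction hz hp)
    simpa [sub_eq_zero] using this
  · simpa [sub_eq_zero] using hfx

lemma exists_affineMap_eq_zero_of_notMem_of_notMem (s : AffineSubspace K V) {p x y : V}
    (hp : p ∈ s) (hx : x ∉ s) (hy : y ∉ s) :
    ∃ g : V →ᵃ[K] K, (∀ z ∈ s, g z = 0) ∧ g x ≠ 0 ∧ g y ≠ 0 := by
  obtain ⟨g₁, hg₁s, hg₁x⟩ := exists_affineMap_eq_zero_of_notMem s hp hx
  obtain ⟨g₂, hg₂s, hg₂y⟩ := exists_affineMap_eq_zero_of_notMem s hp hy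
  by_cases hg₁y : g₁ y = 0
  · by_cases hg₂x : g₂ x = 0
    · refine ⟨g₁ + g₂, fun z hz => ?_, ?_, ?_⟩ <;> simp_all
    · exact ⟨g₂, hg₂s, hg₂x, hg₂y⟩
  · exact ⟨g₁, hg₁s, hg₁x, hg₁y⟩

end VanishingAffineMaps

section AffineFunctionals

variable {E : Type*} [NormedAddCommGroup E] [NormedSpace ℝ E]

lemma exists_affineMap_neg_of_disjoint_line {R : Set E} (hRconv : Convex ℝ R)
    (hRcpt : IsCompact R) {p q : E} (hR : Disjoint R line[ℝ, p, q]) :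
    ∃ h : E →ᵃ[ℝ] ℝ, h p = 0 ∧ h q = 0 ∧ ∀ z ∈ R, h z < 0 := by
  obtain ⟨f, u, v, hfR, huv, hfL⟩ := geometric_hahn_banach_compact_closed hRconv hRcpt
    (AffineSubspace.convex _) (AffineSubspace.closed_of_finiteDimensional _) hR
  have hfpq : f p = f q := eq_of_forall_lt_lineMap (v := v) fun t =>
    (f.toLinearMap.toAffineMap.apply_lineMap p q t).symm ▸
      hfL _ (AffineMap.lineMap_mem_affineSpan_pair t p q)
  refine ⟨f.toLinearMap.toAffineMap - AffineMap.const ℝ E (f p), by simp, by simp [hfpq], ?_⟩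
  intro z hz
  change f z - f p < 0
  linarith [hfR z hz, hfL p (left_mem_affineSpan_pair ℝ p q)]

lemma exists_affineMap_neg_of_disjoint_line_of_notMem [FiniteDimensional ℝ E] {R : Set E}
    (hRconv : Convex ℝ R) (hRcpt : IsCompact R) {p q x y : E} (hR : Disjoint R line[ℝ, p, q])
    (hx : x ∉ line[ℝ, p, q]) (hy : y ∉ line[ℝ, p, q]) :
    ∃ h : E →ᵃ[ℝ] ℝ, h p = 0 ∧ h q = 0 ∧ h x ≠ 0 ∧ h y ≠ 0 ∧ ∀ z ∈ R, h z < 0 := by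
  obtain ⟨h₀, h₀p, h₀q, h₀R⟩ := exists_affineMap_neg_of_disjoint_line hRconv hRcpt hR
  obtain ⟨g, hg, hgx, hgy⟩ :=
    exists_affineMap_eq_zero_of_notMem_of_notMem _ (left_mem_affineSpan_pair ℝ p q) hx hy
  obtain ⟨ε, hεR, hεx, hεy⟩ := ((eventually_nhdsWithin_of_eventually_nhds
    (hRcpt.eventually_forall_add_mul_lt_zero h₀.continuous_of_finiteDimensional
      g.continuous_of_finiteDimensional h₀R)).and
    ((eventually_add_mul_ne_zero hgx).and (eventually_add_mul_ne_zero hgy))).exists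
  refine ⟨h₀ + ε • g, ?_, ?_, hεx, hεy, hεR⟩
  · simp [h₀p, hg p (left_mem_affineSpan_pair ℝ p q)]
  · simp [h₀q, hg q (right_mem_affineSpan_pair ℝ p q)]

lemma exists_neg_pos_of_mem_intrinsicInterior (h : E →ᵃ[ℝ] ℝ) {F : Set E} {p x : E}
    (hp : p ∈ intrinsicInterior ℝ F) (hhp : h p = 0) (hx : x ∈ F) (hhx : h x ≠ 0) :
    ∃ a ∈ F, ∃ b ∈ F, h a < 0 ∧ 0 < h b := by
  obtain ⟨t, ht, htF⟩ :=
    exists_one_lt_lineMap_mem_of_mem_intrinsicInterior hp (mem_affineSpan ℝ hx)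
  have hval : h (lineMap x p t) = (1 - t) * h x := by
    rw [h.apply_lineMap, hhp, lineMap_apply_ring']
    ring
  rcases hhx.lt_or_gt with hneg | hpos
  · exact ⟨x, hx, _, htF, hneg, by rw [hval]; nlinarith⟩
  · exact ⟨_, htF, x, hx, by rw [hval]; nlinarith, hpos⟩

end AffineFunctionals

lemma exists_hyperplane_of_neg_pos {N : ℕ} {F G R S : Set (Pt N)} (hS : S.Finite)
    (hF : IsPreconnected F) (hG : IsPreconnected G) (hR : IsCompact R) (h : Pt N →ᵃ[ℝ] ℝ)
    (hhF : ∃ a ∈ F, ∃ b ∈ F, h a < 0 ∧ 0 < h b) (hhG : ∃ a ∈ G, ∃ b ∈ G, h a < 0 ∧ 0 < h b)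
    (hhR : ∀ z ∈ R, h z < 0) :
    ∃ H : Set (Pt N), IsHyperplane H ∧ (H ∩ F).Nonempty ∧ (H ∩ G).Nonempty ∧ H ∩ R = ∅ ∧
      ∀ v ∈ S, v ∉ H := by
  obtain ⟨a, ha, b, hb, hha, hhb⟩ := hhF
  obtain ⟨a', ha', b', hb', hha', hhb'⟩ := hhG
  have hcont := h.continuous_of_finiteDimensional
  have hS' : ∀ᶠ t in 𝓝[≠] (0 : ℝ), ∀ v ∈ S, h v + t ≠ 0 := by
    filter_upwards [nhdsNE_le_cofinite _ ((hS.image fun v => -h v).eventually_cofinite_notMem)]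
      with t ht v hv hvt
    exact ht ⟨v, hv, by linarith⟩
  obtain ⟨t, ⟨⟨zF, hzF, hzF0⟩, ⟨zG, hzG, hzG0⟩, htR⟩, htS⟩ :=
    ((eventually_nhdsWithin_of_eventually_nhds
      ((hF.eventually_exists_add_eq_zero hcont ha hb hha hhb).and
      ((hG.eventually_exists_add_eq_zero hcont ha' hb' hha' hhb').and
      (hR.eventually_forall_add_mul_lt_zero (g := fun _ => 1) hcont continuous_const
        hhR)))).and hS').exists
  refine ⟨{z | h z + t = 0}, ⟨h + AffineMap.const ℝ _ t, fun hlin => ?_, rfl⟩,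
    ⟨zF, hzF0, hzF⟩, ⟨zG, hzG0, hzG⟩, eq_empty_iff_forall_notMem.2 ?_, htS⟩
  · obtain ⟨c, hc⟩ := (h + AffineMap.const ℝ _ t).linear_eq_zero_iff_exists_const.1 hlin
    have hab : h a + t = h b + t := by
      simpa using (DFunLike.congr_fun hc a).trans (DFunLike.congr_fun hc b).symm
    linarith
  · rintro z ⟨hz0, hzR⟩
    exact (htR z hzR).ne (by simpa using hz0)

lemma IsVertexOf.mem_of_convexHull {N : ℕ} {S : Set (Pt N)} {v : Pt N}
    (hv : IsVertexOf (convexHull ℝ S) v) : v ∈ S :=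
  extremePoints_convexHull_subset (IsExposed.isExtreme hv.1).mem_extremePoints

theorem exists_hyperplane_meeting_two_faces_general {N k : ℕ} (Q F G R : Set (Pt N))
    (hQ : IsPolytope Q) (hk1 : 1 ≤ k)
    (hF : IsKFaceOf k Q F) (hG : IsKFaceOf k Q G) (hR : IsKFaceOf k Q R)
    (hFG : F ≠ G) (hFR : F ≠ R) (hGR : G ≠ R) :
    ∃ H : Set (Pt N), IsHyperplane H ∧
      (H ∩ F).Nonempty ∧ (H ∩ G).Nonempty ∧ H ∩ R = ∅ ∧
      ∀ v : Pt N, IsVertexOf Q v → v ∉ H := by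
  obtain ⟨S, hS, rfl⟩ := hQ
  have hconv {K : Set (Pt N)} (hK : IsKFaceOf k (convexHull ℝ S) K) : Convex ℝ K :=
    IsExposed.convex hK.1 (convex_convexHull ℝ S)
  obtain ⟨p, hp⟩ := hF.nonempty.intrinsicInterior (hconv hF)
  obtain ⟨q, hq⟩ := hG.nonempty.intrinsicInterior (hconv hG)
  have hpF := intrinsicInterior_subset hp
  have hqG := intrinsicInterior_subset hq
  have hpG := hF.notMem_of_mem_intrinsicInterior hG hFG hp
  have hqF := hG.notMem_of_mem_intrinsicInterior hF hFG.symm hq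
  have hRL : Disjoint R line[ℝ, p, q] :=
    disjoint_line_of_isExtreme hF.isExtreme hG.isExtreme hR.isExtreme hpF hpG
      (hF.notMem_of_mem_intrinsicInterior hR hFR hp) hqG hqF
      (hG.notMem_of_mem_intrinsicInterior hR hGR hq)
  obtain ⟨x, hxF, hxL⟩ := not_subset.1 (hF.not_subset_line hk1 hp (hG.subset hqG) hqF)
  obtain ⟨y, hyG, hyL⟩ := not_subset.1 (hG.not_subset_line hk1 hq (hF.subset hpF) hpG)
  rw [pair_comm] at hyL
  have hRcpt : IsCompact R := IsExposed.isCompact hR.1 (hS.isCompact_convexHull (𝕜 := ℝ))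
  obtain ⟨h, hhp, hhq, hhx, hhy, hhR⟩ :=
    exists_affineMap_neg_of_disjoint_line_of_notMem (hconv hR) hRcpt hRL hxL hyL
  obtain ⟨H, hH, hHF, hHG, hHR, hHS⟩ := exists_hyperplane_of_neg_pos hS
    (hconv hF).isPreconnected (hconv hG).isPreconnected hRcpt h
    (exists_neg_pos_of_mem_intrinsicInterior h hp hhp hxF hhx)
    (exists_neg_pos_of_mem_intrinsicInterior h hq hhq hyG hhy) hhR
  exact ⟨H, hH, hHF, hHG, hHR, fun v hv => hHS v hv.mem_of_convexHull⟩

/-- Given three pairwise distinct `k`-faces `F, G, R` of a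
`d`-polytope (`1 ≤ k ≤ d - 1`), there is a hyperplane meeting `F` and `G`,
disjoint from `R`, and containing no vertex of `Q`. -/
theorem exists_hyperplane_meeting_two_faces {N d k : ℕ} (Q F G R : Set (Pt N))
    (hQ : IsPolytope Q) (hd : faceDim Q = d) (hk1 : 1 ≤ k) (hkd : k + 1 ≤ d)
    (hF : IsKFaceOf k Q F) (hG : IsKFaceOf k Q G) (hR : IsKFaceOf k Q R)
    (hFG : F ≠ G) (hFR : F ≠ R) (hGR : G ≠ R) :
    ∃ H : Set (Pt N), IsHyperplane H ∧
      (H ∩ F).Nonempty ∧ (H ∩ G).Nonempty ∧ H ∩ R = ∅ ∧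
      ∀ v : Pt N, IsVertexOf Q v → v ∉ H :=
  exists_hyperplane_meeting_two_faces_general Q F G R hQ hk1 hF hG hR hFG hFR hGR
end

section
/- Let Q be a polytope and H an affine hyperplane that intersects Q but contains no vertex of Q. Then the map φ : F ↦ F ∩ H is an isomorphism of partially ordered sets (ordered by inclusion) from the set of faces of Q that meet H onto the set of nonempty faces of the polytope Q ∩ H. -/
open Set Classical

/-!
Write `H = {g = c}` and `Q = conv S` with `S` finite. If a face `F = argmax_Q l` meets `H`, then
`F ∩ H = argmax_{Q ∩ H} l`, so `F ↦ F ∩ H` lands in the faces of `Q ∩ H`. It is onto: a face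
`argmax_{Q ∩ H} l` equals `argmax_Q (l + t • g) ∩ H` for a Lagrange multiplier `t`, which exists by
a one-dimensional Fourier–Motzkin elimination over `S`: the constraints on `t` coming from a point
of `S` below `H` and one above `H` are compatible because the segment joining them crosses `H`
inside `Q`.

It reflects inclusion because no vertex lies in `H`: a face `F` meeting `H` then has points
strictly on both sides of `H` (otherwise `F ∩ H` is a face of `F`, hence of `Q`, and contains a
vertex of `Q`). A face containing `F ∩ H` contains an interior point of every segment of `F` that
crosses `H`, hence, being an extreme set, both of its endpoints. That faces of faces of a polytope
are faces follows from a lexicographic perturbation `l₁ + ε • l₂` of the exposing functionals.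
-/

open Filter Topology

theorem exists_forall_add_mul_nonpos {ι : Type*} {s : Set ι} (hs : s.Finite) {u v : ι → ℝ}
    (h₀ : ∀ i ∈ s, v i = 0 → u i ≤ 0)
    (h : ∀ i ∈ s, ∀ j ∈ s, v i < 0 → 0 < v j → v j * u i - v i * u j ≤ 0) :
    ∃ t : ℝ, ∀ i ∈ s, u i + t * v i ≤ 0 := by
  set A := (fun i => -u i / v i) '' {i ∈ s | v i < 0}
  set B := (fun i => -u i / v i) '' {i ∈ s | 0 < v i}
  have hAB : ∀ a ∈ A, ∀ b ∈ B, a ≤ b := by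
    rintro _ ⟨i, ⟨hi, hvi⟩, rfl⟩ _ ⟨j, ⟨hj, hvj⟩, rfl⟩
    dsimp only
    rw [← neg_div_neg_eq (-u i), neg_neg, div_le_div_iff₀ (neg_pos.2 hvi) hvj]
    linarith [h i hi j hj hvi hvj]
  obtain ⟨t, htA, htB⟩ : ∃ t, (∀ a ∈ A, a ≤ t) ∧ ∀ b ∈ B, t ≤ b := by
    rcases A.eq_empty_or_nonempty with hA | hA
    · obtain ⟨t, ht⟩ : BddBelow B := ((hs.sep _).image _).bddBelow
      exact ⟨t, by simp [hA], ht⟩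
    · have hA' : BddAbove A := ((hs.sep _).image _).bddAbove
      exact ⟨sSup A, fun a ha => le_csSup hA' ha,
        fun b hb => csSup_le hA fun a ha => hAB a ha b hb⟩
  refine ⟨t, fun i hi => ?_⟩
  rcases lt_trichotomy (v i) 0 with hneg | hzero | hpos
  · linarith [(div_le_iff_of_neg hneg).1 (htA _ ⟨i, ⟨hi, hneg⟩, rfl⟩)]
  · simpa [hzero] using h₀ i hi hzero
  · linarith [(le_div_iff₀ hpos).1 (htB _ ⟨i, ⟨hi, hpos⟩, rfl⟩)]

section TopologicalModule

variable {E : Type*} [AddCommGroup E] [Module ℝ E] [TopologicalSpace E]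

theorem ContinuousLinearMap.le_of_mem_convexHull {S : Set E} {l : StrongDual ℝ E} {r : ℝ}
    (h : ∀ s ∈ S, l s ≤ r) {x : E} (hx : x ∈ convexHull ℝ S) : l x ≤ r :=
  convexHull_min h (convex_halfSpace_le l.toLinearMap.isLinear r) hx

theorem ContinuousLinearMap.toExposed_inter_of_nonempty {A H : Set E} {l : StrongDual ℝ E}
    (hne : (l.toExposed A ∩ H).Nonempty) : l.toExposed A ∩ H = l.toExposed (A ∩ H) := by
  obtain ⟨p, ⟨hpA, hpmax⟩, hpH⟩ := hne
  ext x
  constructor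
  · rintro ⟨⟨hxA, hxmax⟩, hxH⟩
    exact ⟨⟨hxA, hxH⟩, fun y hy => hxmax y hy.1⟩
  · rintro ⟨⟨hxA, hxH⟩, hxmax⟩
    exact ⟨⟨hxA, fun y hy => (hpmax y hy).trans (hxmax p ⟨hpA, hpH⟩)⟩, hxH⟩

theorem IsExposed.inter_of_nonempty {A F H : Set E} (hF : IsExposed ℝ A F)
    (hne : (F ∩ H).Nonempty) : IsExposed ℝ (A ∩ H) (F ∩ H) := by
  obtain ⟨l, rfl⟩ := hF (hne.mono inter_subset_left)
  exact fun _ => ⟨l, l.toExposed_inter_of_nonempty hne⟩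

theorem ContinuousLinearMap.toExposed_add_smul_inter_level (A : Set E) (l g : StrongDual ℝ E)
    (t c : ℝ) :
    (l + t • g).toExposed (A ∩ {x | g x = c}) = l.toExposed (A ∩ {x | g x = c}) := by
  ext x
  refine and_congr_right fun hx => forall₂_congr fun y hy => ?_
  simp only [mem_inter_iff, mem_ofPred_eq] at hx hy
  simp [hx.2, hy.2]

theorem exists_mem_openSegment_apply_eq {g : StrongDual ℝ E} {x z : E} {c : ℝ}
    (hx : g x < c) (hz : c < g z) : ∃ p ∈ openSegment ℝ x z, g p = c := by
  have hd : 0 < g z - g x := by linarith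
  refine ⟨((g z - c) / (g z - g x)) • x + ((c - g x) / (g z - g x)) • z,
    ⟨_, _, div_pos (by linarith) hd, div_pos (by linarith) hd, ?_, rfl⟩, ?_⟩
  · field_simp
    ring
  · simp only [map_add, map_smul, smul_eq_mul]
    field_simp
    ring

theorem exists_toExposed_add_smul_eq {S : Set E} (hS : S.Finite) (l₁ l₂ : StrongDual ℝ E) :
    ∃ ε : ℝ, 0 < ε ∧ (l₁ + ε • l₂).toExposed S = l₂.toExposed (l₁.toExposed S) := by
  have hsmall : ∀ᶠ ε in 𝓝 (0 : ℝ), ∀ x ∈ S, ∀ y ∈ S,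
      l₁ x < l₁ y → ε * (l₂ x - l₂ y) < l₁ y - l₁ x := by
    refine (eventually_all_finite hS).2 fun x _ => (eventually_all_finite hS).2 fun y _ => ?_
    by_cases hxy : l₁ x < l₁ y
    · have hlim : Tendsto (fun ε : ℝ => ε * (l₂ x - l₂ y)) (𝓝 0) (𝓝 0) := by
        simpa using (continuous_mul_const (l₂ x - l₂ y)).tendsto 0
      exact (hlim.eventually (gt_mem_nhds (sub_pos.2 hxy))).mono fun _ h _ => h
    · exact Eventually.of_forall fun _ h => absurd h hxy
  obtain ⟨ε, hε, hε0⟩ := ((hsmall.filter_mono nhdsWithin_le_nhds).and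
    (self_mem_nhdsWithin (s := Ioi (0 : ℝ)))).exists
  refine ⟨ε, hε0, ?_⟩
  ext x
  simp only [ContinuousLinearMap.toExposed, mem_ofPred_eq, add_apply, smul_apply, smul_eq_mul]
  constructor
  · rintro ⟨hxS, hxmax⟩
    have hx₁ : ∀ y ∈ S, l₁ y ≤ l₁ x := fun y hy => by
      by_contra! hlt
      linarith [hε x hxS y hy hlt, hxmax y hy]
    refine ⟨⟨hxS, hx₁⟩, fun y ⟨hyS, hy₁⟩ => ?_⟩
    have hl₁ : l₁ y = l₁ x := le_antisymm (hx₁ y hyS) (hy₁ x hxS)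
    have hmax := hxmax y hyS
    rw [hl₁, add_le_add_iff_left] at hmax
    exact le_of_mul_le_mul_left hmax hε0
  · rintro ⟨⟨hxS, hx₁⟩, hx₂⟩
    refine ⟨hxS, fun y hyS => ?_⟩
    rcases (hx₁ y hyS).lt_or_eq with hlt | heq
    · linarith [hε y hyS x hxS hlt]
    · rw [heq]
      gcongr
      exact hx₂ y ⟨hyS, fun z hz => heq ▸ hx₁ z hz⟩

theorem IsExposed.exists_isExposed_convexHull_inter_eq {S : Set E} (hS : S.Finite)
    {g : StrongDual ℝ E} {c : ℝ} {F' : Set E}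
    (hF' : IsExposed ℝ (convexHull ℝ S ∩ {x | g x = c}) F') (hne : F'.Nonempty) :
    ∃ F, IsExposed ℝ (convexHull ℝ S) F ∧ F ∩ {x | g x = c} = F' := by
  obtain ⟨l, rfl⟩ := hF' hne
  obtain ⟨p, ⟨hpQ, hpH : g p = c⟩, hpmax⟩ := hne
  obtain ⟨t, ht⟩ : ∃ t : ℝ, ∀ s ∈ S, (l s - l p) + t * (g s - c) ≤ 0 := by
    refine exists_forall_add_mul_nonpos hS (fun s hs hgs => ?_) fun a ha b hb hga hgb => ?_
    · exact sub_nonpos.2 (hpmax s ⟨subset_convexHull ℝ S hs, sub_eq_zero.1 hgs⟩)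
    · obtain ⟨q, ⟨α, β, hα, hβ, hαβ, rfl⟩, hgq⟩ :=
        exists_mem_openSegment_apply_eq (sub_neg.1 hga) (sub_pos.1 hgb)
      have hqQ : α • a + β • b ∈ convexHull ℝ S := (convex_convexHull ℝ S).openSegment_subset
        (subset_convexHull ℝ S ha) (subset_convexHull ℝ S hb) ⟨α, β, hα, hβ, hαβ, rfl⟩
      have hlq := hpmax _ ⟨hqQ, hgq⟩
      simp only [map_add, map_smul, smul_eq_mul] at hgq hlq
      obtain rfl : β = 1 - α := by linarith
      rw [← hgq]
      linarith [mul_nonneg (by linarith : 0 ≤ g b - g a) (sub_nonneg.2 hlq)]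
  have hmax : ∀ x ∈ convexHull ℝ S, (l + t • g) x ≤ (l + t • g) p :=
    fun x => (l + t • g).le_of_mem_convexHull fun s hs => by
      simp only [add_apply, smul_apply, smul_eq_mul, hpH]
      linarith [ht s hs]
  refine ⟨(l + t • g).toExposed (convexHull ℝ S), ContinuousLinearMap.toExposed.isExposed, ?_⟩
  rw [ContinuousLinearMap.toExposed_inter_of_nonempty ⟨p, ⟨hpQ, hmax⟩, hpH⟩,
    ContinuousLinearMap.toExposed_add_smul_inter_level]
  rfl

end TopologicalModule

section LocallyConvex

variable {E : Type*} [AddCommGroup E] [Module ℝ E] [TopologicalSpace E] [IsTopologicalAddGroup E]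
  [ContinuousSMul ℝ E] [LocallyConvexSpace ℝ E] [T2Space E]

-- The extreme points of the face lie in `S`, and Krein–Milman recovers the face from them.
theorem ContinuousLinearMap.toExposed_convexHull {S : Set E} (hS : S.Finite)
    (l : StrongDual ℝ E) : l.toExposed (convexHull ℝ S) = convexHull ℝ (l.toExposed S) := by
  have hF : IsExposed ℝ (convexHull ℝ S) (l.toExposed (convexHull ℝ S)) :=
    ContinuousLinearMap.toExposed.isExposed
  have hFconv : Convex ℝ (l.toExposed (convexHull ℝ S)) := hF.convex (convex_convexHull ℝ S)
  refine subset_antisymm ?_ (convexHull_min ?_ hFconv)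
  · have hext : (l.toExposed (convexHull ℝ S)).extremePoints ℝ ⊆ l.toExposed S :=
      fun x hx => ⟨extremePoints_convexHull_subset
          (hF.isExtreme.extremePoints_subset_extremePoints hx),
        fun y hy => (extremePoints_subset hx).2 y (subset_convexHull ℝ S hy)⟩
    rw [← closure_convexHull_extremePoints (hF.isCompact (hS.isCompact_convexHull ℝ)) hFconv,
      ← ((hS.subset (sep_subset S _) : (l.toExposed S).Finite).isCompact_convexHull
        ℝ).isClosed.closure_eq]
    exact closure_mono (convexHull_mono hext)
  · exact fun x ⟨hxS, hxmax⟩ =>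
      ⟨subset_convexHull ℝ S hxS, fun y hy => l.le_of_mem_convexHull hxmax hy⟩

theorem IsExposed.trans_convexHull {S F G : Set E} (hS : S.Finite)
    (hF : IsExposed ℝ (convexHull ℝ S) F) (hG : IsExposed ℝ F G) :
    IsExposed ℝ (convexHull ℝ S) G := by
  intro hGne
  obtain ⟨l₁, rfl⟩ := hF (hGne.mono hG.subset)
  obtain ⟨l₂, rfl⟩ := hG hGne
  obtain ⟨ε, -, hε⟩ := exists_toExposed_add_smul_eq hS l₁ l₂
  refine ⟨l₁ + ε • l₂, ?_⟩
  change l₂.toExposed (l₁.toExposed (convexHull ℝ S)) = (l₁ + ε • l₂).toExposed (convexHull ℝ S)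
  rw [l₁.toExposed_convexHull hS,
    l₂.toExposed_convexHull (hS.subset (sep_subset S _) : (l₁.toExposed S).Finite), ← hε,
    (l₁ + ε • l₂).toExposed_convexHull hS]

end LocallyConvex

section InnerProductSpace

variable {E : Type*} [NormedAddCommGroup E] [InnerProductSpace ℝ E]

-- A point of `T` of maximal norm is exposed by the functional `⟪v, ·⟫`.
theorem exists_isExposed_singleton_convexHull {T : Set E} (hT : T.Finite) (hne : T.Nonempty) :
    ∃ v ∈ T, IsExposed ℝ (convexHull ℝ T) {v} := by
  obtain ⟨v, hvT, hvmax⟩ := exists_max_image T (‖·‖) hT hne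
  have hexp : (innerSL ℝ v).toExposed T = {v} := by
    ext t
    simp only [ContinuousLinearMap.toExposed, innerSL_apply_apply, mem_ofPred_eq, mem_singleton_iff]
    constructor
    · rintro ⟨htT, htmax⟩
      have h₁ : ‖v‖ ^ 2 ≤ inner ℝ v t := real_inner_self_eq_norm_sq v ▸ htmax v hvT
      have h₂ : inner ℝ v t ≤ ‖v‖ * ‖t‖ := real_inner_le_norm v t
      have h₃ : ‖t‖ ≤ ‖v‖ := hvmax t htT
      have : ‖t - v‖ ^ 2 ≤ 0 := by
        rw [norm_sub_sq_real, real_inner_comm]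
        nlinarith [norm_nonneg t, norm_nonneg v]
      exact sub_eq_zero.1 (norm_eq_zero.1 (by nlinarith [norm_nonneg (t - v)]))
    · rintro rfl
      refine ⟨hvT, fun y hy => ?_⟩
      rw [real_inner_self_eq_norm_sq]
      nlinarith [real_inner_le_norm t y, hvmax y hy, norm_nonneg t]
  refine ⟨v, hvT, ?_⟩
  rw [← convexHull_singleton (𝕜 := ℝ) v, ← hexp, ← ContinuousLinearMap.toExposed_convexHull hT]
  exact ContinuousLinearMap.toExposed.isExposed

theorem IsExposed.exists_isExposed_singleton {S F : Set E} (hS : S.Finite)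
    (hF : IsExposed ℝ (convexHull ℝ S) F) (hne : F.Nonempty) :
    ∃ v ∈ F, IsExposed ℝ (convexHull ℝ S) {v} := by
  obtain ⟨l, hl⟩ := hF hne
  rw [show F = convexHull ℝ (l.toExposed S) from hl.trans (l.toExposed_convexHull hS)] at hF hne ⊢
  obtain ⟨v, hvT, hv⟩ := exists_isExposed_singleton_convexHull (hS.subset (sep_subset S _))
    (convexHull_nonempty_iff.1 hne)
  exact ⟨v, subset_convexHull ℝ _ hvT, hF.trans_convexHull hS hv⟩

theorem IsExposed.exists_apply_lt {S F : Set E} (hS : S.Finite) {g : StrongDual ℝ E} {c : ℝ}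
    (hv : ∀ v, IsExposed ℝ (convexHull ℝ S) {v} → g v ≠ c)
    (hF : IsExposed ℝ (convexHull ℝ S) F) {p : E} (hpF : p ∈ F) (hp : g p = c) :
    ∃ y ∈ F, g y < c := by
  by_contra! hge
  have hG : IsExposed ℝ (convexHull ℝ S) ((-g).toExposed F) :=
    hF.trans_convexHull hS ContinuousLinearMap.toExposed.isExposed
  obtain ⟨v, ⟨hvF, hvmax⟩, hvexp⟩ := hG.exists_isExposed_singleton hS
    ⟨p, hpF, fun y hy => by simpa [hp] using hge y hy⟩
  exact hv v hvexp (le_antisymm (by simpa [hp] using hvmax p hpF) (hge v hvF))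

theorem IsExposed.subset_of_inter_subset {S F₁ F₂ : Set E} (hS : S.Finite)
    {g : StrongDual ℝ E} {c : ℝ} (hv : ∀ v, IsExposed ℝ (convexHull ℝ S) {v} → g v ≠ c)
    (hF₁ : IsExposed ℝ (convexHull ℝ S) F₁) (hF₂ : IsExposed ℝ (convexHull ℝ S) F₂)
    (hne : (F₁ ∩ {x | g x = c}).Nonempty) (hsub : F₁ ∩ {x | g x = c} ⊆ F₂) : F₁ ⊆ F₂ := by
  obtain ⟨p, hpF, hp : g p = c⟩ := hne
  have hcross : ∀ a ∈ F₁, ∀ b ∈ F₁, g a < c → c < g b → a ∈ F₂ ∧ b ∈ F₂ := by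
    intro a ha b hb hga hgb
    obtain ⟨q, hq, hgq⟩ := exists_mem_openSegment_apply_eq hga hgb
    have hqF₁ : q ∈ F₁ := (hF₁.convex (convex_convexHull ℝ S)).openSegment_subset ha hb hq
    have hqF₂ : q ∈ F₂ := hsub ⟨hqF₁, hgq⟩
    exact ⟨hF₂.isExtreme.left_mem_of_mem_openSegment (hF₁.subset ha) (hF₁.subset hb) hqF₂ hq,
      hF₂.isExtreme.right_mem_of_mem_openSegment (hF₁.subset ha) (hF₁.subset hb) hqF₂ hq⟩
  intro x hx
  rcases lt_trichotomy (g x) c with hlt | heq | hgt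
  · obtain ⟨z, hz, hgz⟩ := hF₁.exists_apply_lt hS (g := -g) (c := -c)
      (fun v hv' => by simpa using hv v hv') hpF (by simp [hp])
    exact (hcross x hx z hz hlt (by simpa using hgz)).1
  · exact hsub ⟨hx, heq⟩
  · obtain ⟨z, hz, hgz⟩ := hF₁.exists_apply_lt hS hv hpF hp
    exact (hcross z hz x hx hgz hgt).2

end InnerProductSpace

theorem faceDim_singleton {N : ℕ} (v : Pt N) : faceDim {v} = 0 := by
  simp [faceDim, direction_affineSpan, vectorSpan_singleton]

theorem IsHyperplane.exists_eq_setOf_apply_eq {N : ℕ} {H : Set (Pt N)} (hH : IsHyperplane H) :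
    ∃ (g : StrongDual ℝ (Pt N)) (c : ℝ), H = {x | g x = c} := by
  obtain ⟨f, -, rfl⟩ := hH
  refine ⟨LinearMap.toContinuousLinearMap f.linear, -f 0, ?_⟩
  ext x
  rw [mem_ofPred_eq, mem_ofPred_eq, congrFun f.decomp x, eq_neg_iff_add_eq_zero]
  rfl

theorem face_poset_iso_of_hyperplane_section_general {N : ℕ} (Q H : Set (Pt N))
    (hQ : IsPolytope Q) (hH : IsHyperplane H)
    (hv : ∀ v : Pt N, IsVertexOf Q v → v ∉ H) :
    ∃ e : {F : Set (Pt N) // IsFaceOf Q F ∧ (F ∩ H).Nonempty} ≃o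
          {F' : Set (Pt N) // IsFaceOf (Q ∩ H) F' ∧ F'.Nonempty},
      ∀ F, (e F : Set (Pt N)) = (F : Set (Pt N)) ∩ H := by
  obtain ⟨S, hS, rfl⟩ := hQ
  obtain ⟨g, c, rfl⟩ := hH.exists_eq_setOf_apply_eq
  have hv' : ∀ v, IsExposed ℝ (convexHull ℝ S) {v} → g v ≠ c :=
    fun v hvexp => hv v ⟨hvexp, faceDim_singleton v⟩
  let φ : {F : Set (Pt N) // IsFaceOf (convexHull ℝ S) F ∧ (F ∩ {x | g x = c}).Nonempty} →
      {F' : Set (Pt N) // IsFaceOf (convexHull ℝ S ∩ {x | g x = c}) F' ∧ F'.Nonempty} :=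
    fun F => ⟨F.1 ∩ {x | g x = c}, F.2.1.inter_of_nonempty F.2.2, F.2.2⟩
  have hφ : ∀ F₁ F₂, φ F₁ ≤ φ F₂ ↔ F₁ ≤ F₂ := fun F₁ F₂ =>
    ⟨fun h => F₁.2.1.subset_of_inter_subset hS hv' F₂.2.1 F₁.2.2
      ((Subtype.coe_le_coe.2 h).trans inter_subset_left),
      fun h => inter_subset_inter_left _ h⟩
  have hsurj : Function.Surjective φ := fun F' => by
    obtain ⟨F, hF, hFF'⟩ := F'.2.1.exists_isExposed_convexHull_inter_eq hS F'.2.2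
    exact ⟨⟨F, hF, hFF' ▸ F'.2.2⟩, Subtype.ext hFF'⟩
  exact ⟨OrderIso.ofSurjective (OrderEmbedding.ofMapLEIff φ hφ) hsurj, fun _ => rfl⟩

/-- For a polytope `Q` and a hyperplane `H` meeting `Q` but no
vertex of `Q`, the map `F ↦ F ∩ H` is a poset isomorphism from the faces of `Q`
meeting `H` onto the nonempty faces of `Q ∩ H`. -/
theorem face_poset_iso_of_hyperplane_section {N : ℕ} (Q H : Set (Pt N))
    (hQ : IsPolytope Q) (hH : IsHyperplane H) (hQH : (Q ∩ H).Nonempty)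
    (hv : ∀ v : Pt N, IsVertexOf Q v → v ∉ H) :
    ∃ e : {F : Set (Pt N) // IsFaceOf Q F ∧ (F ∩ H).Nonempty} ≃o
          {F' : Set (Pt N) // IsFaceOf (Q ∩ H) F' ∧ F'.Nonempty},
      ∀ F, (e F : Set (Pt N)) = (F : Set (Pt N)) ∩ H :=
  face_poset_iso_of_hyperplane_section_general Q H hQ hH hv
end

section
/- Let Q be a polytope and H an affine hyperplane intersecting Q but containing no vertex of Q. If F is a face of Q that meets H, then F ∩ H is a face of the polytope Q ∩ H; indeed, any supporting hyperplane exposing F in Q also exposes F ∩ H in Q ∩ H. -/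
open Set Classical

/-- A maximizer of `f` on `A` lying in `B` shows that the maximum over `A ∩ B` is the maximum
over `A`. -/
theorem maximizers_inter_eq_of_nonempty {α β : Type*} [Preorder β] (f : α → β) {A B : Set α}
    (h : ({x ∈ A | ∀ y ∈ A, f y ≤ f x} ∩ B).Nonempty) :
    {x ∈ A | ∀ y ∈ A, f y ≤ f x} ∩ B = {x ∈ A ∩ B | ∀ y ∈ A ∩ B, f y ≤ f x} := by
  obtain ⟨z, ⟨hzA, hz_max⟩, hzB⟩ := h
  ext x
  constructor
  · rintro ⟨⟨hxA, hx_max⟩, hxB⟩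
    exact ⟨⟨hxA, hxB⟩, fun y hy => hx_max y hy.1⟩
  · rintro ⟨⟨hxA, hxB⟩, hx_max⟩
    exact ⟨⟨hxA, fun y hy => (hz_max y hy).trans (hx_max z ⟨hzA, hzB⟩)⟩, hxB⟩

theorem face_inter_hyperplane_is_face_general {N : ℕ} (Q H F : Set (Pt N))
    (hF : IsFaceOf Q F) (hFH : (F ∩ H).Nonempty) :
    IsFaceOf (Q ∩ H) (F ∩ H) ∧
    ∀ l : Pt N →L[ℝ] ℝ, F = {x ∈ Q | ∀ y ∈ Q, l y ≤ l x} →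
      F ∩ H = {x ∈ Q ∩ H | ∀ y ∈ Q ∩ H, l y ≤ l x} := by
  have exposes : ∀ l : Pt N →L[ℝ] ℝ, F = {x ∈ Q | ∀ y ∈ Q, l y ≤ l x} →
      F ∩ H = {x ∈ Q ∩ H | ∀ y ∈ Q ∩ H, l y ≤ l x} := by
    intro l hl
    subst hl
    exact maximizers_inter_eq_of_nonempty l hFH
  refine ⟨fun _ => ?_, exposes⟩
  obtain ⟨l, hl⟩ := hF (hFH.mono inter_subset_left)
  exact ⟨l, exposes l hl⟩

/-- If `H` is a hyperplane meeting the polytope `Q` but no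
vertex of `Q`, and `F` is a face of `Q` meeting `H`, then `F ∩ H` is a face of
`Q ∩ H`; indeed any linear functional exposing `F` in `Q` exposes `F ∩ H` in
`Q ∩ H`. -/
theorem face_inter_hyperplane_is_face {N : ℕ} (Q H F : Set (Pt N))
    (hQ : IsPolytope Q) (hH : IsHyperplane H) (hQH : (Q ∩ H).Nonempty)
    (hv : ∀ v : Pt N, IsVertexOf Q v → v ∉ H)
    (hF : IsFaceOf Q F) (hFH : (F ∩ H).Nonempty) :
    IsFaceOf (Q ∩ H) (F ∩ H) ∧
    ∀ l : Pt N →L[ℝ] ℝ, F = {x ∈ Q | ∀ y ∈ Q, l y ≤ l x} →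
      F ∩ H = {x ∈ Q ∩ H | ∀ y ∈ Q ∩ H, l y ≤ l x} :=
  face_inter_hyperplane_is_face_general Q H F hF hFH
end

section
/- Let Q be a polytope and H an affine hyperplane intersecting Q but containing no vertex of Q. Then for every nonempty face F′ of the polytope Q ∩ H there exists a face F of Q meeting H with F ∩ H = F′; namely, if x is a point in the relative interior of F′ and F is the unique face of Q whose relative interior contains x, then F ∩ H = F′. -/
/-! If `x` lies in the relative interiors of `F'` and of a face `F` of `Q`, then `F ∩ H` and `F'`
are extreme subsets of `Q ∩ H`, each containing a relative interior point of the other. An extreme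
set containing a relative interior point of a set `D` contains all of `D`, since every segment of
`D` ending at that point can be prolonged beyond it inside `D`; hence `F ∩ H = F'`.

Such a face `F` exists for every `x ∈ Q = conv S`: if `x` is on the relative boundary of `Q`, a
supporting functional at `x` cuts out a proper exposed face, the convex hull of fewer points of
`S`, and we induct, using that for polytopes an exposed face of an exposed face is exposed. -/

open Set Classical

open Filter Topology AffineMap

section IntrinsicInterior

variable {𝕜 V P : Type*} [Ring 𝕜] [AddCommGroup V] [Module 𝕜 V] [TopologicalSpace P]
  [AddTorsor V P] {s : Set P} {x : P}

theorem mem_intrinsicInterior_iff_mem_nhdsWithin :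
    x ∈ intrinsicInterior 𝕜 s ↔ x ∈ s ∧ s ∈ 𝓝[affineSpan 𝕜 s] x := by
  constructor
  · rintro ⟨y, hy, rfl⟩
    have hs := preimage_coe_mem_nhds_subtype.1 (mem_interior_iff_mem_nhds.1 hy)
    exact ⟨mem_of_mem_nhdsWithin y.2 hs, hs⟩
  · rintro ⟨hxs, hs⟩
    exact ⟨⟨x, subset_affineSpan 𝕜 s hxs⟩,
      mem_interior_iff_mem_nhds.2 (preimage_coe_mem_nhds_subtype.2 hs), rfl⟩

theorem mem_intrinsicInterior_inter_affineSubspace {H : AffineSubspace 𝕜 P}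
    (hx : x ∈ intrinsicInterior 𝕜 s) (hxH : x ∈ H) :
    x ∈ intrinsicInterior 𝕜 (s ∩ H) := by
  rw [mem_intrinsicInterior_iff_mem_nhdsWithin] at hx ⊢
  have hspan : (affineSpan 𝕜 (s ∩ H) : Set P) ⊆ affineSpan 𝕜 s ∩ H :=
    subset_inter (affineSpan_mono 𝕜 inter_subset_left) (affineSpan_le.2 inter_subset_right)
  exact ⟨⟨hx.1, hxH⟩, inter_mem (nhdsWithin_mono x (hspan.trans inter_subset_left) hx.2)
    (mem_of_superset self_mem_nhdsWithin (hspan.trans inter_subset_right))⟩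

end IntrinsicInterior

theorem IsExtreme.inter_inter {𝕜 E : Type*} [Semiring 𝕜] [PartialOrder 𝕜] [AddCommMonoid E]
    [Module 𝕜 E] {A F : Set E} (hF : IsExtreme 𝕜 A F) (B : Set E) :
    IsExtreme 𝕜 (A ∩ B) (F ∩ B) :=
  ⟨inter_subset_inter_left B hF.subset, fun _ hx₁ _ hx₂ _ hz hseg =>
    ⟨hF.left_mem_of_mem_openSegment hx₁.1 hx₂.1 hz.1 hseg, hx₁.2⟩⟩

section Extreme

variable {E : Type*} [AddCommGroup E] [Module ℝ E] [TopologicalSpace E]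
  [IsTopologicalAddGroup E] [ContinuousSMul ℝ E]

theorem exists_mem_openSegment_of_mem_intrinsicInterior {D : Set E} {x y : E}
    (hx : x ∈ intrinsicInterior ℝ D) (hy : y ∈ D) : ∃ z ∈ D, x ∈ openSegment ℝ y z := by
  obtain ⟨hxD, hD⟩ := mem_intrinsicInterior_iff_mem_nhdsWithin.1 hx
  have hline : Tendsto (lineMap y x) (𝓝 (1 : ℝ)) (𝓝[affineSpan ℝ D] x) := by
    refine tendsto_nhdsWithin_iff.2 ⟨?_, Eventually.of_forall fun t =>
      lineMap_mem t (subset_affineSpan ℝ D hy) (subset_affineSpan ℝ D hxD)⟩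
    simpa using (lineMap_continuous (R := ℝ) (p := y) (q := x)).tendsto 1
  obtain ⟨t, htD, ht⟩ := (((hline.eventually hD).filter_mono nhdsWithin_le_nhds).and
    (self_mem_nhdsWithin (s := Ioi 1))).exists
  have ht0 : (0 : ℝ) < t := zero_lt_one.trans ht
  refine ⟨lineMap y x t, htD, ?_⟩
  rw [openSegment_eq_image_lineMap]
  refine ⟨t⁻¹, ⟨inv_pos.2 ht0, inv_lt_one_of_one_lt₀ ht⟩, ?_⟩
  rw [lineMap_lineMap_right, inv_mul_cancel₀ ht0.ne', lineMap_apply_one]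

theorem IsExtreme.subset_of_mem_intrinsicInterior {A G D : Set E} (hG : IsExtreme ℝ A G)
    (hDA : D ⊆ A) {x : E} (hxG : x ∈ G) (hxD : x ∈ intrinsicInterior ℝ D) : D ⊆ G := by
  intro y hy
  obtain ⟨z, hzD, hxyz⟩ := exists_mem_openSegment_of_mem_intrinsicInterior hxD hy
  exact hG.left_mem_of_mem_openSegment (hDA hy) (hDA hzD) hxG hxyz

theorem IsExtreme.inter_eq_of_mem_intrinsicInterior {Q F F' : Set E} {H : AffineSubspace ℝ E}
    (hF' : IsExtreme ℝ (Q ∩ H) F') (hF : IsExtreme ℝ Q F) {x : E}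
    (hxF' : x ∈ intrinsicInterior ℝ F') (hxF : x ∈ intrinsicInterior ℝ F) : F ∩ H = F' := by
  have hxQH : x ∈ Q ∩ H := hF'.subset (intrinsicInterior_subset hxF')
  refine (hF'.subset_of_mem_intrinsicInterior (inter_subset_inter_left _ hF.subset)
    (intrinsicInterior_subset hxF')
    (mem_intrinsicInterior_inter_affineSubspace hxF hxQH.2)).antisymm ?_
  exact (hF.inter_inter H).subset_of_mem_intrinsicInterior hF'.subset
    ⟨intrinsicInterior_subset hxF, hxQH.2⟩ hxF'

end Extreme

theorem Set.Finite.exists_pos_forall_add_mul_lt {ι : Type*} {I : Set ι} (hI : I.Finite)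
    {a b : ι → ℝ} {c d : ℝ} (h : ∀ i ∈ I, a i < c) :
    ∃ ε > 0, ∀ i ∈ I, a i + ε * b i < c + ε * d := by
  have hsmall : ∀ᶠ ε in 𝓝 (0 : ℝ), ∀ i ∈ I, a i + ε * b i < c + ε * d :=
    (eventually_all_finite hI).2 fun i hi =>
      (by fun_prop : Continuous fun ε : ℝ => a i + ε * b i).continuousAt.eventually_lt
        (by fun_prop : Continuous fun ε : ℝ => c + ε * d).continuousAt (by simpa using h i hi)
  obtain ⟨ε, hε, hεpos⟩ :=
    ((hsmall.filter_mono nhdsWithin_le_nhds).and (self_mem_nhdsWithin (s := Ioi 0))).exists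
  exact ⟨ε, hεpos, hε⟩

section Normed

variable {E : Type*} [NormedAddCommGroup E] [NormedSpace ℝ E]

/-- In `V`, the direction of the affine span of `Q`, the set `Q - x` has nonempty interior but is
not a neighbourhood of `0`; separate there and extend the functional to `E` through a projection
onto `V`. -/
theorem Convex.exists_forall_le_of_notMem_intrinsicInterior [FiniteDimensional ℝ E] {Q : Set E}
    (hQ : Convex ℝ Q) {x : E} (hxQ : x ∈ Q) (hx : x ∉ intrinsicInterior ℝ Q) :
    ∃ l : StrongDual ℝ E, (∀ y ∈ Q, l y ≤ l x) ∧ ∃ y ∈ Q, l y < l x := by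
  set V := (affineSpan ℝ Q).direction
  have hsub : ∀ {y}, y ∈ affineSpan ℝ Q → y - x ∈ V := fun hy =>
    AffineSubspace.vsub_mem_direction hy (subset_affineSpan ℝ Q hxQ)
  obtain ⟨π, hπ⟩ := V.subtype.exists_leftInverse_of_injective V.ker_subtype
  let p : E →L[ℝ] V := LinearMap.toContinuousLinearMap π
  have hp : ∀ v : V, p v = v := fun v => LinearMap.congr_fun hπ v
  set D : Set V := {v | (v : E) + x ∈ Q}
  have hD : Convex ℝ D := (hQ.translate_preimage_left x).linear_preimage V.subtype
  have hD0 : D ∉ 𝓝 0 := by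
    intro h
    refine hx (mem_intrinsicInterior_iff_mem_nhdsWithin.2 ⟨hxQ, ?_⟩)
    have hpre : (fun y => p (y - x)) ⁻¹' D ∈ 𝓝 x :=
      (by fun_prop : Continuous fun y => p (y - x)).continuousAt.preimage_mem_nhds
        (by simpa using h)
    filter_upwards [nhdsWithin_le_nhds hpre, self_mem_nhdsWithin] with y hyD hyA
    have hpy : (p (y - x) : E) = y - x := congrArg Subtype.val (hp ⟨y - x, hsub hyA⟩)
    simpa only [D, mem_preimage, mem_ofPred_eq, hpy, sub_add_cancel] using hyD
  obtain ⟨w, hw⟩ := Set.Nonempty.intrinsicInterior hQ ⟨x, hxQ⟩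
  obtain ⟨hwQ, hwQ'⟩ := mem_intrinsicInterior_iff_mem_nhdsWithin.1 hw
  set d : V := ⟨w - x, hsub (subset_affineSpan ℝ Q hwQ)⟩
  have hDd : D ∈ 𝓝 d := by
    have : Tendsto (fun v : V => (v : E) + x) (𝓝 d) (𝓝[affineSpan ℝ Q] w) := by
      refine tendsto_nhdsWithin_iff.2 ⟨?_, Eventually.of_forall fun v => ?_⟩
      · simpa [d] using (by fun_prop : Continuous fun v : V => (v : E) + x).tendsto d
      · exact AffineSubspace.vadd_mem_of_mem_direction v.2 (subset_affineSpan ℝ Q hxQ)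
    exact this hwQ'
  obtain ⟨f, hf0, hfD⟩ := geometric_hahn_banach_of_nonempty_interior_point hD
    (mt mem_interior_iff_mem_nhds.1 hD0) ⟨d, mem_interior_iff_mem_nhds.2 hDd⟩
  -- `f` is an open map, so its maximum over `D` is not attained at the interior point `d`
  have hfd : f d < 0 := by
    have : Iic (0 : ℝ) ∈ 𝓝 (f d) := mem_of_superset
      ((f.isOpenMap_of_ne_zero hf0).image_mem_nhds hDd)
      (by rintro _ ⟨v, hv, rfl⟩; simpa using hfD v hv)
    simpa using mem_interior_iff_mem_nhds.2 this
  have hl : ∀ y (hy : y ∈ affineSpan ℝ Q), f (p y) = f (p x) + f ⟨y - x, hsub hy⟩ := by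
    intro y hy
    rw [← map_add, ← hp ⟨y - x, hsub hy⟩, ← map_add, add_sub_cancel]
  refine ⟨f.comp p, fun y hy => ?_, w, hwQ, ?_⟩
  · have := hfD ⟨y - x, hsub (subset_affineSpan ℝ Q hy)⟩ (by simpa [D] using hy)
    simp only [ContinuousLinearMap.comp_apply, hl y (subset_affineSpan ℝ Q hy)]
    simpa using this
  · simp only [ContinuousLinearMap.comp_apply, hl w (subset_affineSpan ℝ Q hwQ)]
    linarith

/-- By Krein–Milman, `F` is the closed convex hull of its extreme points, which lie in `S`. -/
theorem IsExposed.convexHull_inter_eq {S F : Set E} (hS : S.Finite)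
    (hF : IsExposed ℝ (convexHull ℝ S) F) : convexHull ℝ (S ∩ F) = F := by
  have hFconv : Convex ℝ F := hF.convex (convex_convexHull ℝ S)
  refine (convexHull_min inter_subset_right hFconv).antisymm ?_
  have hext : F.extremePoints ℝ ⊆ S ∩ F := fun y hy =>
    ⟨extremePoints_convexHull_subset (hF.isExtreme.extremePoints_subset_extremePoints hy), hy.1⟩
  have hFcpt : IsCompact F := hF.isCompact (hS.isCompact_convexHull (𝕜 := ℝ))
  calc F = closure (convexHull ℝ (F.extremePoints ℝ)) :=
        (closure_convexHull_extremePoints hFcpt hFconv).symm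
    _ ⊆ closure (convexHull ℝ (S ∩ F)) := closure_mono (convexHull_mono hext)
    _ = convexHull ℝ (S ∩ F) := ((hS.inter_of_left F).isClosed_convexHull (𝕜 := ℝ)).closure_eq

/-- If `F₁` maximizes `l₁` and `F₂` maximizes `l₂` over `F₁`, then `F₂` maximizes `l₁ + ε • l₂`
for `ε > 0` so small that the points of `S` off `F₁` stay below the level of `F₂`. -/
theorem IsExposed.trans_of_finite {S F₁ F₂ : Set E} (hS : S.Finite)
    (h₁ : IsExposed ℝ (convexHull ℝ S) F₁) (h₂ : IsExposed ℝ F₁ F₂) :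
    IsExposed ℝ (convexHull ℝ S) F₂ := by
  set Q := convexHull ℝ S
  rintro ⟨p, hp⟩
  have hpF₁ : p ∈ F₁ := h₂.subset hp
  have hpQ : p ∈ Q := h₁.subset hpF₁
  obtain ⟨l₁, hl₁⟩ := h₁ ⟨p, hpF₁⟩
  obtain ⟨l₂, hl₂⟩ := h₂ ⟨p, hp⟩
  have mem_F₁ : ∀ {y}, y ∈ F₁ ↔ y ∈ Q ∧ ∀ z ∈ Q, l₁ z ≤ l₁ y := fun {y} => by rw [hl₁]; rfl
  have mem_F₂ : ∀ {y}, y ∈ F₂ ↔ y ∈ F₁ ∧ ∀ z ∈ F₁, l₂ z ≤ l₂ y := fun {y} => by rw [hl₂]; rfl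
  obtain ⟨ε, hε, hεS⟩ := (hS.sep fun s => l₁ s < l₁ p).exists_pos_forall_add_mul_lt
    (b := fun s => l₂ s) (d := l₂ p) fun s hs => hs.2
  set l : StrongDual ℝ E := l₁ + ε • l₂
  have hl : ∀ y, l y = l₁ y + ε * l₂ y := fun y => rfl
  have hlS : ∀ s ∈ S, l s ≤ l p ∧ (l s = l p → s ∈ F₂) := by
    intro s hs
    have hsQ : s ∈ Q := subset_convexHull ℝ S hs
    rcases (mem_F₁.1 hpF₁).2 s hsQ |>.lt_or_eq with hlt | heq
    · have hls : l s < l p := by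
        rw [hl, hl]
        exact hεS s ⟨hs, hlt⟩
      exact ⟨hls.le, fun h => absurd h hls.ne⟩
    · have hsF₁ : s ∈ F₁ := mem_F₁.2 ⟨hsQ, fun z hz => heq ▸ (mem_F₁.1 hpF₁).2 z hz⟩
      have hle := (mem_F₂.1 hp).2 s hsF₁
      refine ⟨by rw [hl, hl, heq]; gcongr, fun h => mem_F₂.2 ⟨hsF₁, fun z hz => ?_⟩⟩
      have hl₂ : l₂ s = l₂ p := mul_left_cancel₀ hε.ne' (by rw [hl, hl, heq] at h; linarith)
      exact hl₂ ▸ (mem_F₂.1 hp).2 z hz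
  have hlQ : ∀ y ∈ Q, l y ≤ l p := fun y hy =>
    convexHull_min (fun s hs => (hlS s hs).1)
      (convex_halfSpace_le l.toLinearMap.isLinear (l p)) hy
  refine ⟨l, Subset.antisymm (fun y hy => ⟨h₁.subset (h₂.subset hy), fun z hz => ?_⟩)
    fun y hy => ?_⟩
  · have hyF₁ := (mem_F₂.1 hy).1
    calc l z ≤ l p := hlQ z hz
      _ ≤ l y := by
        rw [hl, hl]
        exact add_le_add ((mem_F₁.1 hyF₁).2 p hpQ)
          (mul_le_mul_of_nonneg_left ((mem_F₂.1 hy).2 p hpF₁) hε.le)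
  · have hG := (ContinuousLinearMap.toExposed.isExposed (l := l) (A := Q)).convexHull_inter_eq hS
    refine convexHull_min (fun s hs => (hlS s hs.1).2 ((hlS s hs.1).1.antisymm (hs.2.2 p hpQ)))
      (h₂.convex (h₁.convex (convex_convexHull ℝ S))) (hG.superset hy)

theorem Finset.exists_isExposed_convexHull_mem_intrinsicInterior [FiniteDimensional ℝ E]
    (S : Finset E) {x : E} (hx : x ∈ convexHull ℝ (S : Set E)) :
    ∃ F, IsExposed ℝ (convexHull ℝ (S : Set E)) F ∧ x ∈ intrinsicInterior ℝ F := by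
  induction S using Finset.strongInduction with
  | H S ih =>
  set Q := convexHull ℝ (S : Set E)
  by_cases hxQ : x ∈ intrinsicInterior ℝ Q
  · exact ⟨Q, IsExposed.refl Q, hxQ⟩
  obtain ⟨l, hle, y, hyQ, hyx⟩ :=
    (convex_convexHull ℝ (S : Set E)).exists_forall_le_of_notMem_intrinsicInterior hx hxQ
  set F₁ := l.toExposed Q
  have hF₁ : IsExposed ℝ Q F₁ := ContinuousLinearMap.toExposed.isExposed
  have hT : convexHull ℝ (S.filter (· ∈ F₁) : Set E) = F₁ := by
    rw [Finset.coe_filter]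
    exact hF₁.convexHull_inter_eq S.finite_toSet
  have hTS : S.filter (· ∈ F₁) ⊂ S := by
    refine Finset.filter_ssubset.2 ?_
    by_contra! hS
    have hQF₁ : Q ⊆ F₁ := convexHull_min hS (hF₁.convex (convex_convexHull ℝ _))
    exact (hQF₁ hyQ).2 x hx |>.not_gt hyx
  obtain ⟨F, hF, hxF⟩ := ih _ hTS (hT.superset ⟨hx, hle⟩)
  exact ⟨F, hF₁.trans_of_finite S.finite_toSet (hT ▸ hF), hxF⟩

end Normed

theorem face_of_section_lifts_general {N : ℕ} (Q H : Set (Pt N))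
    (hQ : IsPolytope Q) (hH : IsHyperplane H)
    (F' : Set (Pt N)) (hF' : IsFaceOf (Q ∩ H) F') (hF'ne : F'.Nonempty) :
    (∃ F : Set (Pt N), IsFaceOf Q F ∧ (F ∩ H).Nonempty ∧ F ∩ H = F') ∧
    ∀ x ∈ intrinsicInterior ℝ F', ∀ F : Set (Pt N),
      IsFaceOf Q F → x ∈ intrinsicInterior ℝ F → F ∩ H = F' := by
  obtain ⟨S, hS, rfl⟩ := hQ
  obtain ⟨f, -, rfl⟩ := hH
  set H' : AffineSubspace ℝ (Pt N) := (AffineSubspace.mk' 0 ⊥).comap f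
  have hH' : {x | f x = 0} = (H' : Set (Pt N)) := by ext; simp [H']
  rw [hH'] at hF' ⊢
  have lift : ∀ x ∈ intrinsicInterior ℝ F', ∀ F, IsFaceOf (convexHull ℝ S) F →
      x ∈ intrinsicInterior ℝ F → F ∩ H' = F' := fun x hx F hF hxF =>
    hF'.isExtreme.inter_eq_of_mem_intrinsicInterior hF.isExtreme hx hxF
  obtain ⟨x, hx⟩ :=
    hF'ne.intrinsicInterior (hF'.convex ((convex_convexHull ℝ S).inter H'.convex))
  have hxQH : x ∈ convexHull ℝ S ∩ H' := hF'.subset (intrinsicInterior_subset hx)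
  obtain ⟨F, hF, hxF⟩ :=
    hS.toFinset.exists_isExposed_convexHull_mem_intrinsicInterior (by simpa using hxQH.1)
  rw [hS.coe_toFinset] at hF
  exact ⟨⟨F, hF, ⟨x, intrinsicInterior_subset hxF, hxQH.2⟩, lift x hx F hF hxF⟩, lift⟩

/-- If `H` is a hyperplane meeting the polytope `Q` but no
vertex of `Q`, then every nonempty face `F'` of `Q ∩ H` arises as `F ∩ H` for a
face `F` of `Q` meeting `H`; namely, for `x` in the relative interior of `F'`,
the unique face of `Q` whose relative interior contains `x` works. -/
theorem face_of_section_lifts {N : ℕ} (Q H : Set (Pt N))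
    (hQ : IsPolytope Q) (hH : IsHyperplane H) (hQH : (Q ∩ H).Nonempty)
    (hv : ∀ v : Pt N, IsVertexOf Q v → v ∉ H)
    (F' : Set (Pt N)) (hF' : IsFaceOf (Q ∩ H) F') (hF'ne : F'.Nonempty) :
    (∃ F : Set (Pt N), IsFaceOf Q F ∧ (F ∩ H).Nonempty ∧ F ∩ H = F') ∧
    ∀ x ∈ intrinsicInterior ℝ F', ∀ F : Set (Pt N),
      IsFaceOf Q F → x ∈ intrinsicInterior ℝ F → F ∩ H = F' :=
  face_of_section_lifts_general Q H hQ hH F' hF' hF'ne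
end
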